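/- arXiv:1202.6085 — 2 statements merged into one kernel-verified Lean document; each statement's English description precedes it below -/
import Mathlib

section
/- Let G be a connected graph (with a loop at every vertex), r ≡ 0 (mod 3), r ≥ 6, diam(G) ≥ r. The relation x ∼ y iff d(x,y) ≤ 2, restricted to the set X of insufficient vertices, is an equivalence relation on X. -/
/-! Vertices pairwise at distance `≥ 3` have disjoint closed neighbourhoods, so `r/3 + 1` of them
whose closed neighbourhoods lie in `N^r(v)` make `v` sufficient. An insufficient vertex `v`
therefore has a vertex at distance `> r`: otherwise the whole graph is `N^r(v)`, and a geodesic
of length `≥ r` carries `r/3 + 1` such centres spaced `3` apart. A vertex `z` with a far vertex is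
sufficient as soon as there are `x`, `q` with `z, x, q` pairwise at distance `≥ 3` and
`d(z,q) ≤ d(z,x) ≤ 4`: add the points at distance `d(z,x) + 3k` on a geodesic from `z` to the
far vertex.

If insufficient `x, z` had `3 ≤ d(x,z) ≤ 4`, follow a geodesic from `x` to a far vertex. Its
distance to `z` is `≤ 2` at step `3` (else `x` is sufficient) and `≥ 3` at step `d(x,z) + 3`,
so it equals `3` at some step `j ≥ 4`, and that vertex makes `z` sufficient. Hence insufficient
vertices at distance `≤ 4` are at distance `≤ 2`, which gives transitivity. -/

/-- The ball of radius `r` around `v` (the `r`-th neighbourhood `N^r(v)`). -/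
def SimpleGraph.nbhdBall {V : Type*} (G : SimpleGraph V) (r : ℕ) (v : V) : Set V :=
  {u : V | G.dist v u ≤ r}

/-- A vertex is *sufficient* if `|N^r(v)| ≥ (r/3 + 1)·δ`, where `δ = G.minDegree + 1`
is the minimum degree of the graph with a loop at every vertex. -/
def SimpleGraph.Sufficient {V : Type*} [Fintype V] (G : SimpleGraph V)
    [DecidableRel G.Adj] (r : ℕ) (v : V) : Prop :=
  (r / 3 + 1) * (G.minDegree + 1) ≤ (G.nbhdBall r v).ncard

lemma Nat.exists_eq_add_one_of_le_of_lt {f : ℕ → ℕ} (hf : ∀ j, f (j + 1) ≤ f j + 1)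
    {a b c : ℕ} (hab : a ≤ b) (ha : f a ≤ c) (hb : c < f b) :
    ∃ j, a < j ∧ j ≤ b ∧ f j = c + 1 := by
  induction b, hab using Nat.le_induction with
  | base => omega
  | succ b hab ih =>
    rcases Nat.lt_or_ge c (f b) with h | h
    · obtain ⟨j, haj, hjb, hj⟩ := ih h
      exact ⟨j, haj, by omega, hj⟩
    · exact ⟨b + 1, by omega, le_rfl, by have := hf b; omega⟩

namespace SimpleGraph

variable {V : Type*} {G : SimpleGraph V}

lemma dist_le_dist_add_one_of_adj_or_eq {u v w : V} (h : G.Adj v w ∨ v = w) :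
    G.dist u w ≤ G.dist u v + 1 := by
  rcases h with h | rfl
  · simpa [dist_eq_one_iff_adj.mpr h] using h.reachable.dist_triangle_right u
  · exact Nat.le_succ _

namespace Walk

variable {u v : V} (p : G.Walk u v)

lemma reachable_getVert (i : ℕ) : G.Reachable u (p.getVert i) := by
  classical exact ⟨p.takeUntil _ (p.getVert_mem_support i)⟩

lemma adj_getVert_succ_or_eq (i : ℕ) :
    G.Adj (p.getVert i) (p.getVert (i + 1)) ∨ p.getVert i = p.getVert (i + 1) := by
  rcases lt_or_ge i p.length with hi | hi
  · exact .inl (p.adj_getVert_succ hi)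
  · exact .inr (by rw [p.getVert_of_length_le hi, p.getVert_of_length_le (by omega)])

lemma dist_getVert_succ_le (w : V) (i : ℕ) :
    G.dist w (p.getVert (i + 1)) ≤ G.dist w (p.getVert i) + 1 :=
  dist_le_dist_add_one_of_adj_or_eq (p.adj_getVert_succ_or_eq i)

lemma dist_getVert_le (i : ℕ) : G.dist u (p.getVert i) ≤ i := by
  induction i with
  | zero => simp
  | succ i ih => exact (p.dist_getVert_succ_le u i).trans (by omega)

lemma dist_getVert_le_length_sub (i : ℕ) : G.dist (p.getVert i) v ≤ p.length - i := by
  rcases le_or_gt i p.length with hi | hi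
  · simpa [dist_comm, p.getVert_reverse, Nat.sub_sub_self hi] using
      p.reverse.dist_getVert_le (p.length - i)
  · simp [p.getVert_of_length_le hi.le]

variable {p}

lemma dist_getVert_eq_of_length_eq_dist (hp : p.length = G.dist u v) {i : ℕ}
    (hi : i ≤ p.length) :
    G.dist u (p.getVert i) = i := by
  have := (p.reachable_getVert i).dist_triangle_left v
  have := p.dist_getVert_le_length_sub i
  have := p.dist_getVert_le i
  omega

lemma sub_le_dist_getVert_getVert (hp : p.length = G.dist u v) (m : ℕ) {n : ℕ}
    (hn : n ≤ p.length) : n - m ≤ G.dist (p.getVert m) (p.getVert n) := by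
  have := (p.reachable_getVert m).dist_triangle_left (p.getVert n)
  have := p.dist_getVert_le m
  have := dist_getVert_eq_of_length_eq_dist hp hn
  omega

lemma pairwise_three_le_dist_getVert (hp : p.length = G.dist u v) (a : ℕ) {s : Finset ℕ}
    (hs : ∀ k ∈ s, a + 3 * k ≤ p.length) :
    (s : Set ℕ).Pairwise
      fun k l => 3 ≤ G.dist (p.getVert (a + 3 * k)) (p.getVert (a + 3 * l)) := by
  intro k hk l hl hkl
  rcases hkl.lt_or_gt with h | h
  · have := sub_le_dist_getVert_getVert hp (a + 3 * k) (hs l hl)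
    omega
  · have := sub_le_dist_getVert_getVert hp (a + 3 * l) (hs k hk)
    rw [dist_comm]
    omega

end Walk

lemma card_mul_minDegree_succ_le_ncard [Fintype V] [DecidableRel G.Adj] {ι : Type*}
    {s : Finset ι} {c : ι → V} {B : Set V}
    (hsep : (s : Set ι).Pairwise fun i j => 3 ≤ G.dist (c i) (c j))
    (hB : ∀ i ∈ s, insert (c i) (G.neighborSet (c i)) ⊆ B) :
    s.card * (G.minDegree + 1) ≤ B.ncard := by
  classical
  set N : ι → Finset V := fun i => insert (c i) (G.neighborFinset (c i))
  have hN : ∀ i, ∀ y ∈ N i, G.Adj (c i) y ∨ c i = y := by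
    intro i y hy
    rcases Finset.mem_insert.mp hy with rfl | hy
    · exact .inr rfl
    · exact .inl ((G.mem_neighborFinset _ _).mp hy)
  have hdisj : (s : Set ι).PairwiseDisjoint N := by
    intro i hi j hj hij
    refine Finset.disjoint_left.mpr fun y hyi hyj => ?_
    have hiy := dist_le_dist_add_one_of_adj_or_eq (u := c i) (hN i y hyi)
    have hij' := dist_le_dist_add_one_of_adj_or_eq (u := c i)
      ((hN j y hyj).imp Adj.symm Eq.symm)
    have := hsep hi hj hij
    simp only [dist_self] at hiy
    omega
  calc s.card * (G.minDegree + 1)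
      ≤ ∑ i ∈ s, (N i).card := by
        rw [← smul_eq_mul]
        refine Finset.card_nsmul_le_sum _ _ _ fun i _ => ?_
        rw [Finset.card_insert_of_notMem (G.notMem_neighborFinset_self _),
          card_neighborFinset_eq_degree]
        exact Nat.succ_le_succ (G.minDegree_le_degree _)
    _ = (s.biUnion N).card := (Finset.card_biUnion hdisj).symm
    _ ≤ B.ncard := by
      rw [← Set.ncard_coe_finset]
      refine Set.ncard_le_ncard (fun y hy => ?_) (Set.toFinite _)
      simp only [Finset.coe_biUnion, Set.mem_iUnion] at hy
      obtain ⟨i, hi, hy⟩ := hy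
      refine hB i hi ?_
      simpa [N] using hy

lemma Connected.pairwise_three_le_dist_sumElim (hG : G.Connected) {ι κ : Type*} {s : Finset ι}
    {s' : Finset κ} {a : ι → V} {b : κ → V} {z : V} {d : ℕ}
    (ha : (s : Set ι).Pairwise fun i j => 3 ≤ G.dist (a i) (a j))
    (hb : (s' : Set κ).Pairwise fun k l => 3 ≤ G.dist (b k) (b l))
    (hna : ∀ i ∈ s, G.dist z (a i) ≤ d) (hfb : ∀ k ∈ s', d + 3 ≤ G.dist z (b k)) :
    (s.disjSum s' : Set (ι ⊕ κ)).Pairwise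
      fun i j => 3 ≤ G.dist (Sum.elim a b i) (Sum.elim a b j) := by
  have hcross : ∀ i ∈ s, ∀ k ∈ s', 3 ≤ G.dist (a i) (b k) := fun i hi k hk => by
    have := hG.dist_triangle (u := z) (v := a i) (w := b k)
    have := hna i hi
    have := hfb k hk
    omega
  rintro (i | k) hi (j | l) hj hij <;>
    simp only [Finset.mem_coe, Finset.inl_mem_disjSum, Finset.inr_mem_disjSum] at hi hj
  · exact ha hi hj (by simpa using hij)
  · exact hcross i hi l hj
  · exact dist_comm (G := G) ▸ hcross j hj k hi
  · exact hb hi hj (by simpa using hij)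

variable [Fintype V] [DecidableRel G.Adj] {r : ℕ}

lemma sufficient_of_pairwise_three_le_dist {v : V} {ι : Type*}
    {s : Finset ι} {c : ι → V} (hs : r / 3 + 1 ≤ s.card)
    (hsep : (s : Set ι).Pairwise fun i j => 3 ≤ G.dist (c i) (c j))
    (hnear : ∀ i ∈ s, G.dist v (c i) < r) : G.Sufficient r v := by
  refine (Nat.mul_le_mul_right _ hs).trans (card_mul_minDegree_succ_le_ncard hsep ?_)
  rintro i hi y hy
  have := hnear i hi
  have := dist_le_dist_add_one_of_adj_or_eq (u := v) (hy.elim (fun h => .inr h.symm) .inl)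
  exact (show G.dist v y ≤ r by omega)

lemma Connected.exists_lt_dist_of_not_sufficient (hG : G.Connected)
    (hdiam : ∃ u w : V, r ≤ G.dist u w) {v : V} (hv : ¬ G.Sufficient r v) :
    ∃ w, r < G.dist v w := by
  by_contra! hball
  obtain ⟨u, w, huw⟩ := hdiam
  obtain ⟨p, hp⟩ := hG.exists_walk_length_eq_dist u w
  have hsep := p.pairwise_three_le_dist_getVert hp 0 (s := Finset.range (r / 3 + 1))
    fun k hk => by simp only [Finset.mem_range] at hk; omega
  simp only [zero_add] at hsep
  have := card_mul_minDegree_succ_le_ncard (B := G.nbhdBall r v) hsep fun _ _ y _ => hball y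
  exact hv (by rwa [Finset.card_range] at this)

lemma Connected.sufficient_of_three_le_dist (hG : G.Connected) (hr : 6 ≤ r) {x z q w : V}
    (hw : r < G.dist z w) (hzx : 3 ≤ G.dist z x) (hzx' : G.dist z x ≤ 4)
    (hzq : 3 ≤ G.dist z q) (hzq' : G.dist z q ≤ G.dist z x) (hxq : 3 ≤ G.dist x q) :
    G.Sufficient r z := by
  obtain ⟨p, hp⟩ := hG.exists_walk_length_eq_dist z w
  set s' := Finset.Icc 1 (r / 3 - 2)
  have hlen : ∀ k ∈ s', G.dist z x + 3 * k ≤ p.length := fun k hk => by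
    simp only [s', Finset.mem_Icc] at hk; omega
  have hfar : ∀ k ∈ s', G.dist z (p.getVert (G.dist z x + 3 * k)) = G.dist z x + 3 * k :=
    fun k hk => Walk.dist_getVert_eq_of_length_eq_dist hp (hlen k hk)
  have hnear : ∀ i, G.dist z (![z, x, q] i) ≤ G.dist z x := by
    intro i; fin_cases i <;> simp [hzq']
  have hsep : ((Finset.univ : Finset (Fin 3)) : Set (Fin 3)).Pairwise
      fun i j => 3 ≤ G.dist (![z, x, q] i) (![z, x, q] j) := by
    intro i _ j _ hij
    fin_cases i <;> fin_cases j <;> simp at hij ⊢ <;> first | omega | (rw [dist_comm]; omega)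
  have hcard : r / 3 + 1 ≤ ((Finset.univ : Finset (Fin 3)).disjSum s').card := by
    simp only [Finset.card_disjSum, Finset.card_univ, Fintype.card_fin, s', Nat.card_Icc]
    omega
  have hfar' : ∀ k ∈ s', G.dist z x + 3 ≤ G.dist z (p.getVert (G.dist z x + 3 * k)) :=
    fun k hk => by have := (Finset.mem_Icc.mp hk).1; rw [hfar k hk]; omega
  refine sufficient_of_pairwise_three_le_dist hcard (hG.pairwise_three_le_dist_sumElim hsep
    (p.pairwise_three_le_dist_getVert hp _ hlen) (fun i _ => hnear i) hfar') ?_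
  rintro (i | k) hk
  · have := hnear i; simpa using (show G.dist z (![z, x, q] i) < r by omega)
  · have := hfar k (by simpa using hk)
    simp only [Finset.inr_mem_disjSum, s', Finset.mem_Icc] at hk
    simpa using (show G.dist z (p.getVert (G.dist z x + 3 * k)) < r by omega)

lemma Connected.dist_le_two_of_not_sufficient (hG : G.Connected) (hr : 6 ≤ r)
    (hdiam : ∃ u w : V, r ≤ G.dist u w) {x z q : V} (hz : ¬ G.Sufficient r z)
    (hzx : 3 ≤ G.dist z x) (hzx' : G.dist z x ≤ 4)
    (hzq : 3 ≤ G.dist z q) (hzq' : G.dist z q ≤ G.dist z x) : G.dist x q ≤ 2 := by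
  by_contra! hxq
  obtain ⟨w, hw⟩ := hG.exists_lt_dist_of_not_sufficient hdiam hz
  exact hz (hG.sufficient_of_three_le_dist hr hw hzx hzx' hzq hzq' (by omega))

lemma Connected.dist_le_two_of_not_sufficient_of_dist_le_four (hG : G.Connected) (hr : 6 ≤ r)
    (hdiam : ∃ u w : V, r ≤ G.dist u w) {x z : V} (hx : ¬ G.Sufficient r x)
    (hz : ¬ G.Sufficient r z) (h4 : G.dist x z ≤ 4) : G.dist x z ≤ 2 := by
  by_contra! h3
  obtain ⟨w, hw⟩ := hG.exists_lt_dist_of_not_sufficient hdiam hx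
  obtain ⟨p, hp⟩ := hG.exists_walk_length_eq_dist x w
  have hdist : ∀ j ≤ G.dist x z + 3, G.dist x (p.getVert j) = j := fun j hj =>
    Walk.dist_getVert_eq_of_length_eq_dist hp (by omega)
  have hstart : G.dist z (p.getVert 3) ≤ 2 :=
    hG.dist_le_two_of_not_sufficient hr hdiam hx h3 h4 (hdist 3 (by omega)).ge
      (by rw [hdist 3 (by omega)]; omega)
  have hend : 2 < G.dist z (p.getVert (G.dist x z + 3)) := by
    have := hG.dist_triangle (u := x) (v := z) (w := p.getVert (G.dist x z + 3))
    rw [hdist _ le_rfl] at this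
    omega
  obtain ⟨j, hj3, hjz, hj⟩ := Nat.exists_eq_add_one_of_le_of_lt
    (f := fun j => G.dist z (p.getVert j)) (p.dist_getVert_succ_le z)
    (by omega) hstart hend
  have := hG.dist_le_two_of_not_sufficient hr hdiam hz (q := p.getVert j)
    (by rwa [dist_comm]) (by rwa [dist_comm]) hj.ge
    (by rw [hj, dist_comm]; omega)
  rw [hdist j hjz] at this
  omega

end SimpleGraph

theorem edge_growth_insufficient_equivalence_general {V : Type*} [Fintype V]
    (G : SimpleGraph V) [DecidableRel G.Adj] (hG : G.Connected)
    (r : ℕ) (hr : 6 ≤ r)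
    (hdiam : ∃ u w : V, r ≤ G.dist u w) :
    Equivalence (fun a b : {v : V // ¬ G.Sufficient r v} => G.dist a.1 b.1 ≤ 2) := by
  refine ⟨fun a => by simp, fun h => SimpleGraph.dist_comm ▸ h, fun {a b c} hab hbc => ?_⟩
  have := hG.dist_triangle (u := a.1) (v := b.1) (w := c.1)
  exact hG.dist_le_two_of_not_sufficient_of_dist_le_four hr hdiam a.2 c.2 (by omega)

/-- the relation `x ∼ y ↔ d(x,y) ≤ 2`, restricted to the set of
insufficient vertices, is an equivalence relation. -/
theorem edge_growth_insufficient_equivalence {V : Type*} [Fintype V]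
    (G : SimpleGraph V) [DecidableRel G.Adj] (hG : G.Connected)
    (r : ℕ) (hr3 : r % 3 = 0) (hr : 6 ≤ r)
    (hdiam : ∃ u w : V, r ≤ G.dist u w) :
    Equivalence (fun a b : {v : V // ¬ G.Sufficient r v} => G.dist a.1 b.1 ≤ 2) :=
  edge_growth_insufficient_equivalence_general G hG r hr hdiam
end

section
/- Let G be a connected graph (with a loop at every vertex), r ≡ 0 (mod 3), r ≥ 6, diam(G) ≥ r. Let X_1, ..., X_l (l ≥ 2) be the equivalence classes of insufficient vertices under d ≤ 2. Then for all i ≠ j, d(X_i, X_j) ≥ r+1, and at most one pair (i,j) satisfies d(X_i, X_j) = r+1. -/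
/-!
Every lower bound comes from packing: `r/3 + 1` vertices within distance `r - 1` of `v`, pairwise
at distance at least 3, have disjoint closed neighbourhoods inside `N^r(v)`, so `v` is sufficient.
Such families are read off geodesics by taking every third vertex.

An insufficient vertex `v` has eccentricity above `r` (some vertex is sufficient, so `N^r(v)` is
not everything), hence a geodesic ray of length `r + 1`. Two vertices at distance at least 3 on the
`ρ`-sphere of `v`, `3 ≤ ρ < r`, would complete the ray vertices at the other positions
`≡ ρ (mod 3)` to such a family; so these spheres have diameter at most 2. Therefore a vertex at
distance `d ∈ [3, r)` from `v` is within 2 of the ray vertex at position `d`, and one at distance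
`r` is within 3 of the ray vertex at position `r - 1`; in both cases the ray yields a packing that
makes it sufficient. Finally, if insufficient `x, y` are at distance `r + 1` and `z` is at distance
at least `r` from both, going from `y` to `z` through the `(r - 1)`-sphere of `x` gives
`d(y, z) ≤ d(x, z) - r + 5`, and symmetrically; this is impossible for `r ≥ 6`. So every insufficient
vertex lies within 2 of `x` or of `y`.
-/

namespace SimpleGraph

variable {V : Type*}

def IsGeodesicOn (G : SimpleGraph V) (p : ℕ → V) (L : ℕ) : Prop :=
  ∀ i j, i ≤ j → j ≤ L → G.dist (p i) (p j) = j - i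

variable {G : SimpleGraph V}

lemma IsGeodesicOn.mono {p : ℕ → V} {L L' : ℕ} (hp : G.IsGeodesicOn p L) (hL : L' ≤ L) :
    G.IsGeodesicOn p L' :=
  fun i j hij hj => hp i j hij (hj.trans hL)

lemma IsGeodesicOn.dist_zero {p : ℕ → V} {L t : ℕ} (hp : G.IsGeodesicOn p L) (ht : t ≤ L) :
    G.dist (p 0) (p t) = t := by
  simpa using hp 0 t t.zero_le ht

lemma IsGeodesicOn.dist_eq_sub_add_sub {p : ℕ → V} {L i j : ℕ} (hp : G.IsGeodesicOn p L)
    (hi : i ≤ L) (hj : j ≤ L) : G.dist (p i) (p j) = i - j + (j - i) := by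
  rcases le_total i j with h | h
  · rw [hp i j h hj]
    omega
  · rw [dist_comm, hp j i h hi]
    omega

lemma Walk.dist_getVert_add_le {u w : V} (W : G.Walk u w) (i k : ℕ) :
    G.dist (W.getVert i) (W.getVert (i + k)) ≤ k := by
  have h : G.dist (W.getVert i) ((W.drop i).getVert k) ≤ k :=
    (dist_le ((W.drop i).take k)).trans (by simp)
  rwa [Walk.drop_getVert] at h

lemma Connected.exists_isGeodesicOn (hG : G.Connected) (u w : V) :
    ∃ p : ℕ → V, p 0 = u ∧ p (G.dist u w) = w ∧ G.IsGeodesicOn p (G.dist u w) := by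
  obtain ⟨W, hW⟩ := hG.exists_walk_length_eq_dist u w
  refine ⟨W.getVert, W.getVert_zero, hW ▸ W.getVert_length, fun i j hij hj => ?_⟩
  have hui := W.dist_getVert_add_le 0 i
  have hij' := W.dist_getVert_add_le i (j - i)
  have hjw := W.dist_getVert_add_le j (W.length - j)
  rw [W.getVert_zero, zero_add] at hui
  rw [Nat.add_sub_cancel' hij] at hij'
  rw [Nat.add_sub_cancel' (hW ▸ hj), W.getVert_length] at hjw
  have := hG.dist_triangle (u := u) (v := W.getVert i) (w := W.getVert j)
  have := hG.dist_triangle (u := u) (v := W.getVert j) (w := w)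
  omega

lemma Connected.exists_dist_eq_dist_eq (hG : G.Connected) {u w : V} {t : ℕ}
    (ht : t ≤ G.dist u w) : ∃ a, G.dist u a = t ∧ G.dist a w = G.dist u w - t := by
  obtain ⟨p, hp0, hpL, hp⟩ := hG.exists_isGeodesicOn u w
  refine ⟨p t, hp0 ▸ hp.dist_zero ht, ?_⟩
  simpa [hpL] using hp t _ ht le_rfl

section Packing

variable [Fintype V] [DecidableRel G.Adj]

lemma dist_le_one_of_mem_insert_neighborFinset [DecidableEq V] {c a : V}
    (ha : a ∈ insert c (G.neighborFinset c)) : G.dist c a ≤ 1 := by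
  rcases Finset.mem_insert.mp ha with rfl | ha
  · simp
  · exact (dist_eq_one_iff_adj.mpr ((G.mem_neighborFinset c a).mp ha)).le

lemma minDegree_add_one_le_card_insert_neighborFinset [DecidableEq V] (c : V) :
    G.minDegree + 1 ≤ (insert c (G.neighborFinset c)).card := by
  rw [Finset.card_insert_of_notMem (by simp), card_neighborFinset_eq_degree]
  exact Nat.succ_le_succ (G.minDegree_le_degree c)

lemma mul_minDegree_add_one_le_ncard_nbhdBall (hG : G.Connected) {r n : ℕ} {v : V}
    {c : ℕ → V} (hsep : ∀ i j, i < j → j < n → 3 ≤ G.dist (c i) (c j))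
    (hball : ∀ i < n, G.dist v (c i) < r) :
    n * (G.minDegree + 1) ≤ (G.nbhdBall r v).ncard := by
  classical
  set N : ℕ → Finset V := fun i => insert (c i) (G.neighborFinset (c i))
  have hdisj : (↑(Finset.range n) : Set ℕ).PairwiseDisjoint N := by
    intro i hi j hj hij
    refine Finset.disjoint_left.mpr fun a hai haj => ?_
    have hij3 : 3 ≤ G.dist (c i) (c j) := by
      rcases lt_or_gt_of_ne hij with h | h
      · exact hsep i j h (Finset.mem_range.mp hj)
      · exact dist_comm (G := G) ▸ hsep j i h (Finset.mem_range.mp hi)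
    have := hG.dist_triangle (u := c i) (v := a) (w := c j)
    have := dist_le_one_of_mem_insert_neighborFinset hai
    have := dist_le_one_of_mem_insert_neighborFinset haj
    have : G.dist a (c j) = G.dist (c j) a := dist_comm
    omega
  have hsub : (↑((Finset.range n).biUnion N) : Set V) ⊆ G.nbhdBall r v := by
    intro a ha
    obtain ⟨i, hi, hai⟩ := Finset.mem_biUnion.mp ha
    have := hG.dist_triangle (u := v) (v := c i) (w := a)
    have := dist_le_one_of_mem_insert_neighborFinset hai
    have := hball i (Finset.mem_range.mp hi)
    show G.dist v a ≤ r
    omega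
  calc n * (G.minDegree + 1) = ∑ _i ∈ Finset.range n, (G.minDegree + 1) := by simp
    _ ≤ ∑ i ∈ Finset.range n, (N i).card :=
        Finset.sum_le_sum fun i _ => G.minDegree_add_one_le_card_insert_neighborFinset (c i)
    _ = ((Finset.range n).biUnion N).card := (Finset.card_biUnion hdisj).symm
    _ ≤ (G.nbhdBall r v).ncard := by
        rw [← Set.ncard_coe_finset]
        exact Set.ncard_le_ncard hsub

lemma sufficient_of_separated (hG : G.Connected) {r : ℕ} {v : V} {c : ℕ → V}
    (hsep : ∀ i j, i < j → j ≤ r / 3 → 3 ≤ G.dist (c i) (c j))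
    (hball : ∀ i ≤ r / 3, G.dist v (c i) < r) : G.Sufficient r v :=
  mul_minDegree_add_one_le_ncard_nbhdBall hG (fun i j hij hj => hsep i j hij (by omega))
    fun i hi => hball i (by omega)

end Packing

section Sufficient

variable [Fintype V] [DecidableRel G.Adj] {r : ℕ}

lemma exists_sufficient_of_le_dist (hG : G.Connected) (hr : 2 ≤ r) {u w : V}
    (huw : r ≤ G.dist u w) : ∃ s, G.Sufficient r s := by
  obtain ⟨p, -, -, hp⟩ := hG.exists_isGeodesicOn u w
  refine ⟨p 1, sufficient_of_separated hG (c := fun i => p (3 * i)) (fun i j hij hj => ?_)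
    fun i hi => ?_⟩
  · have := hp (3 * i) (3 * j) (by omega) (by omega)
    omega
  · have := hp.dist_eq_sub_add_sub (i := 1) (j := 3 * i) (by omega) (by omega)
    omega

lemma exists_isGeodesicOn_of_not_sufficient (hG : G.Connected) {s v : V}
    (hs : G.Sufficient r s) (hv : ¬ G.Sufficient r v) :
    ∃ p : ℕ → V, p 0 = v ∧ G.IsGeodesicOn p (r + 1) := by
  obtain ⟨w, hw⟩ : ∃ w, r < G.dist v w := by
    by_contra! h
    have huniv : G.nbhdBall r v = Set.univ := Set.eq_univ_of_forall h
    have : (G.nbhdBall r s).ncard ≤ (G.nbhdBall r v).ncard := by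
      rw [huniv]
      exact Set.ncard_le_ncard (Set.subset_univ _)
    exact hv (le_trans hs this)
  obtain ⟨p, hp0, -, hp⟩ := hG.exists_isGeodesicOn v w
  exact ⟨p, hp0, hp.mono hw⟩

lemma dist_le_two_of_not_sufficient (hG : G.Connected) (hr3 : 3 ∣ r) {s v a b : V}
    (hs : G.Sufficient r s) (hv : ¬ G.Sufficient r v) (ha3 : 3 ≤ G.dist v a)
    (har : G.dist v a < r) (hb : G.dist v b = G.dist v a) : G.dist a b ≤ 2 := by
  by_contra! hab
  obtain ⟨p, rfl, hp⟩ := exists_isGeodesicOn_of_not_sufficient hG hs hv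
  set ρ := G.dist (p 0) a
  have hsphere : ∀ e, G.dist (p 0) e = ρ → ∀ t ≤ r + 1, t + 3 ≤ ρ ∨ ρ + 3 ≤ t →
      3 ≤ G.dist e (p t) ∧ 3 ≤ G.dist (p t) e := by
    intro e he t ht hρt
    have := hG.dist_triangle (u := p 0) (v := p t) (w := e)
    have := hG.dist_triangle (u := p 0) (v := e) (w := p t)
    have := hp.dist_zero ht
    have : G.dist e (p t) = G.dist (p t) e := dist_comm
    omega
  apply hv
  -- the ray vertices at positions `≡ ρ [MOD 3]` below `r`, with `a` in place of `p ρ`, and `b`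
  refine sufficient_of_separated hG
    (c := fun j => if j = ρ / 3 then a else if j = r / 3 then b else p (ρ % 3 + 3 * j)) ?_ ?_
  · intro i j hij hj
    have := hsphere a rfl (ρ % 3 + 3 * i)
    have := hsphere a rfl (ρ % 3 + 3 * j)
    have := hsphere b hb (ρ % 3 + 3 * i)
    have := hsphere b hb (ρ % 3 + 3 * j)
    have := hp (ρ % 3 + 3 * i) (ρ % 3 + 3 * j)
    split_ifs <;> omega
  · intro j hj
    have := hp.dist_zero (t := ρ % 3 + 3 * j)
    split_ifs <;> omega

lemma sufficient_of_dist_lt (hG : G.Connected) (hr3 : 3 ∣ r) {s x y : V}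
    (hs : G.Sufficient r s) (hx : ¬ G.Sufficient r x) (hxy3 : 3 ≤ G.dist x y)
    (hxyr : G.dist x y < r) : G.Sufficient r y := by
  obtain ⟨p, rfl, hp⟩ := exists_isGeodesicOn_of_not_sufficient hG hs hx
  set d := G.dist (p 0) y
  have hyd : G.dist y (p d) ≤ 2 :=
    dist_le_two_of_not_sufficient hG hr3 hs hx hxy3 hxyr (hp.dist_zero (by omega))
  -- `x = p 0, p 3, …, p r`, all within `r - 1` of `y` as `y` is within 2 of `p d`
  refine sufficient_of_separated hG (c := fun i => p (3 * i)) (fun i j hij hj => ?_)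
    fun i hi => ?_
  · have := hp (3 * i) (3 * j) (by omega) (by omega)
    omega
  · rcases i with _ | i
    · rw [dist_comm]
      exact hxyr
    · have := hG.dist_triangle (u := y) (v := p d) (w := p (3 * (i + 1)))
      have := hp.dist_eq_sub_add_sub (i := d) (j := 3 * (i + 1)) (by omega) (by omega)
      omega

lemma sufficient_of_dist_eq (hG : G.Connected) (hr3 : 3 ∣ r) (hr : 6 ≤ r) {s x y : V}
    (hs : G.Sufficient r s) (hx : ¬ G.Sufficient r x) (hxy : G.dist x y = r) :
    G.Sufficient r y := by
  obtain ⟨p, rfl, hp⟩ := exists_isGeodesicOn_of_not_sufficient hG hs hx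
  obtain ⟨a, hxa, hay⟩ := hG.exists_dist_eq_dist_eq (u := p 0) (w := y) (t := 1) (by omega)
  obtain ⟨b, hxb, hby⟩ := hG.exists_dist_eq_dist_eq (u := p 0) (w := y) (t := r - 1) (by omega)
  have hbp : G.dist b (p (r - 1)) ≤ 2 :=
    dist_le_two_of_not_sufficient hG hr3 hs hx (by omega) (by omega)
      ((hp.dist_zero (t := r - 1) (by omega)).trans hxb.symm)
  -- `a, p 4, p 7, …, p (r + 1)`, all within `r - 1` of `y` as `y` is within 3 of `p (r - 1)`
  refine sufficient_of_separated hG (c := fun i => if i = 0 then a else p (3 * i + 1))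
    (fun i j hij hj => ?_) fun i hi => ?_
  · have := hp (3 * i + 1) (3 * j + 1) (by omega) (by omega)
    have := hp.dist_zero (t := 3 * j + 1) (by omega)
    have := hG.dist_triangle (u := p 0) (v := a) (w := p (3 * j + 1))
    split_ifs <;> omega
  · have := hG.dist_triangle (u := y) (v := b) (w := p (r - 1))
    have := hG.dist_triangle (u := y) (v := p (r - 1)) (w := p (3 * i + 1))
    have := hp.dist_eq_sub_add_sub (i := r - 1) (j := 3 * i + 1) (by omega) (by omega)
    have : G.dist y a = G.dist a y := dist_comm
    have : G.dist y b = G.dist b y := dist_comm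
    split_ifs <;> omega

lemma add_one_le_dist_of_not_sufficient (hG : G.Connected) (hr3 : 3 ∣ r) (hr : 6 ≤ r)
    {s x y : V} (hs : G.Sufficient r s) (hx : ¬ G.Sufficient r x) (hy : ¬ G.Sufficient r y)
    (hxy : 2 < G.dist x y) : r + 1 ≤ G.dist x y := by
  by_contra! h
  rcases (Nat.lt_succ_iff.mp h).lt_or_eq with h | h
  · exact hy (sufficient_of_dist_lt hG hr3 hs hx hxy h)
  · exact hy (sufficient_of_dist_eq hG hr3 hr hs hx h)

lemma dist_add_le_of_dist_eq_add_one (hG : G.Connected) (hr3 : 3 ∣ r) (hr : 6 ≤ r)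
    {s x y z : V} (hs : G.Sufficient r s) (hx : ¬ G.Sufficient r x)
    (hxy : G.dist x y = r + 1) (hxz : r - 1 ≤ G.dist x z) :
    G.dist y z + r ≤ G.dist x z + 5 := by
  obtain ⟨a, hxa, haz⟩ := hG.exists_dist_eq_dist_eq hxz
  obtain ⟨b, hxb, hby⟩ := hG.exists_dist_eq_dist_eq (show r - 1 ≤ G.dist x y by omega)
  have hab := dist_le_two_of_not_sufficient hG hr3 hs hx (by omega) (by omega)
    (hxb.trans hxa.symm)
  have := hG.dist_triangle (u := y) (v := b) (w := a)
  have := hG.dist_triangle (u := y) (v := a) (w := z)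
  have : G.dist y b = G.dist b y := dist_comm
  have : G.dist b a = G.dist a b := dist_comm
  omega

lemma dist_le_two_or_dist_le_two (hG : G.Connected) (hr3 : 3 ∣ r) (hr : 6 ≤ r)
    {s x y w : V} (hs : G.Sufficient r s) (hx : ¬ G.Sufficient r x) (hy : ¬ G.Sufficient r y)
    (hw : ¬ G.Sufficient r w) (hxy : G.dist x y = r + 1) :
    G.dist x w ≤ 2 ∨ G.dist y w ≤ 2 := by
  by_contra! h
  have := add_one_le_dist_of_not_sufficient hG hr3 hr hs hx hw h.1
  have := add_one_le_dist_of_not_sufficient hG hr3 hr hs hy hw h.2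
  have := dist_add_le_of_dist_eq_add_one hG hr3 hr hs hx hxy (z := w) (by omega)
  have := dist_add_le_of_dist_eq_add_one hG hr3 hr hs hy (dist_comm.trans hxy) (z := w) (by omega)
  omega

end Sufficient

end SimpleGraph

open SimpleGraph in
theorem edge_growth_classes_far_apart_general {V : Type*} [Fintype V]
    (G : SimpleGraph V) [DecidableRel G.Adj] (hG : G.Connected)
    (r : ℕ) (hr3 : r % 3 = 0) (hr : 6 ≤ r)
    (hdiam : ∃ u w : V, r ≤ G.dist u w) :
    (∀ x y : V, ¬ G.Sufficient r x → ¬ G.Sufficient r y → 2 < G.dist x y →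
        r + 1 ≤ G.dist x y) ∧
      (∀ x y x' y' : V, ¬ G.Sufficient r x → ¬ G.Sufficient r y →
        ¬ G.Sufficient r x' → ¬ G.Sufficient r y' →
        2 < G.dist x y → 2 < G.dist x' y' →
        G.dist x y = r + 1 → G.dist x' y' = r + 1 →
        (G.dist x x' ≤ 2 ∧ G.dist y y' ≤ 2) ∨ (G.dist x y' ≤ 2 ∧ G.dist y x' ≤ 2)) := by
  have h3 : 3 ∣ r := Nat.dvd_of_mod_eq_zero hr3
  obtain ⟨u, w, huw⟩ := hdiam
  obtain ⟨s, hs⟩ := exists_sufficient_of_le_dist hG (by omega) huw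
  refine ⟨fun x y hx hy => add_one_le_dist_of_not_sufficient hG h3 hr hs hx hy, ?_⟩
  intro x y x' y' hx hy hx' hy' _ _ hxy hx'y'
  have := dist_le_two_or_dist_le_two hG h3 hr hs hx hy hx' hxy
  have := dist_le_two_or_dist_le_two hG h3 hr hs hx hy hy' hxy
  have := hG.dist_triangle (u := x') (v := x) (w := y')
  have := hG.dist_triangle (u := x') (v := y) (w := y')
  have : G.dist x' x = G.dist x x' := dist_comm
  have : G.dist x' y = G.dist y x' := dist_comm
  omega

/-- insufficient vertices lying in distinct equivalence classes of the
relation `d ≤ 2` are at distance at least `r + 1`, and at most one pair of classes is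
at distance exactly `r + 1`: if `x, y` and `x', y'` are two pairs of insufficient
vertices in distinct classes realising distance `r + 1`, then the pairs of classes
coincide, i.e. `x ∼ x'` and `y ∼ y'`, or `x ∼ y'` and `y ∼ x'`. -/
theorem edge_growth_classes_far_apart {V : Type*} [Fintype V]
    (G : SimpleGraph V) [DecidableRel G.Adj] (hG : G.Connected)
    (r : ℕ) (hr3 : r % 3 = 0) (hr : 6 ≤ r)
    (hdiam : ∃ u w : V, r ≤ G.dist u w)
    (hl : ∃ x y : V, ¬ G.Sufficient r x ∧ ¬ G.Sufficient r y ∧ 2 < G.dist x y) :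
    (∀ x y : V, ¬ G.Sufficient r x → ¬ G.Sufficient r y → 2 < G.dist x y →
        r + 1 ≤ G.dist x y) ∧
      (∀ x y x' y' : V, ¬ G.Sufficient r x → ¬ G.Sufficient r y →
        ¬ G.Sufficient r x' → ¬ G.Sufficient r y' →
        2 < G.dist x y → 2 < G.dist x' y' →
        G.dist x y = r + 1 → G.dist x' y' = r + 1 →
        (G.dist x x' ≤ 2 ∧ G.dist y y' ≤ 2) ∨ (G.dist x y' ≤ 2 ∧ G.dist y x' ≤ 2)) :=
  edge_growth_classes_far_apart_general G hG r hr3 hr hdiam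
end
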